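/- arXiv:math/0507090 — 5 statements merged into one kernel-verified Lean document; each statement's English description precedes it below -/
import Mathlib

section
/- Let Σ be a finite alphabet (a fintype) and let L be a language over Σ. If L is context-free, then the language L° := {y ++ x | x, y : List Σ, x ++ y ∈ L} of all cyclic permutations of words of L is also context-free. -/
/-!
Fix a grammar for `L` with initial symbol `S`. If `x ++ y ∈ L`, the cut between `x` and `y`
falls, in a derivation of `x ++ y`, inside the output of some rule `A → α β`, at the boundary
of `α` and `β`: there are words with `S ⇒* u A v`, `α ⇒* x₂`, `β ⇒* y₁`, `x = u ++ x₂`,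
`y = y₁ ++ v`, so `y ++ x = y₁ ++ (v ++ u) ++ x₂`. The rotated contexts `v ++ u` of the
occurrences of a nonterminal `A` in sentential forms are themselves generated context-freely:
`S` has the empty context, and for a rule `A → α C β`, the rotated contexts of that `C` are
`β ++ c ++ α` with `c` a rotated context of `A`.

Completeness of the resulting grammar follows by induction along derivations of the original
one. For soundness, the intended languages of the new nonterminals satisfy the rules read as
inequations between languages, and the language of a grammar lies below every such solution.
-/

namespace List
variable {α : Type*}

theorem append_eq_append_append_iff {s₁ s₂ p m q : List α} :
    s₁ ++ s₂ = p ++ m ++ q ↔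
      (∃ p', p = s₁ ++ p' ∧ s₂ = p' ++ m ++ q) ∨
      (∃ m₁ m₂, m = m₁ ++ m₂ ∧ s₁ = p ++ m₁ ∧ s₂ = m₂ ++ q) ∨
      (∃ q', q = q' ++ s₂ ∧ s₁ = p ++ m ++ q') := by
  constructor
  · rw [append_assoc, append_eq_append_iff]
    rintro (⟨p', rfl, rfl⟩ | ⟨b, rfl, h⟩)
    · exact .inl ⟨p', rfl, by simp⟩
    · rcases append_eq_append_iff.mp h with ⟨q', rfl, rfl⟩ | ⟨m₂, rfl, rfl⟩
      · exact .inr (.inr ⟨q', rfl, by simp⟩)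
      · exact .inr (.inl ⟨b, m₂, rfl, rfl, rfl⟩)
  · rintro (⟨p', rfl, rfl⟩ | ⟨m₁, m₂, rfl, rfl, rfl⟩ | ⟨q', rfl, rfl⟩) <;> simp

theorem append_cons_eq_append_append_iff {u v p m q : List α} {a : α} :
    u ++ a :: v = p ++ m ++ q ↔
      (∃ p', p = u ++ a :: p' ∧ v = p' ++ m ++ q) ∨
      (∃ m₁ m₂, m = m₁ ++ a :: m₂ ∧ u = p ++ m₁ ∧ v = m₂ ++ q) ∨
      (∃ q', q = q' ++ a :: v ∧ u = p ++ m ++ q') := by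
  constructor
  · rw [append_eq_append_append_iff]
    rintro (⟨_ | ⟨b, p'⟩, rfl, h⟩ | ⟨m₁, _ | ⟨b, m₂⟩, rfl, rfl, h⟩ | h)
    · rcases cons_eq_append_iff.mp h with ⟨rfl, rfl⟩ | ⟨m₂, rfl, rfl⟩
      · exact .inr (.inr ⟨[], rfl, by simp⟩)
      · exact .inr (.inl ⟨[], m₂, rfl, by simp, rfl⟩)
    · obtain ⟨rfl, rfl⟩ := cons_eq_cons.mp (h.trans (cons_append ..))
      exact .inl ⟨p', rfl, rfl⟩
    · exact .inr (.inr ⟨[], h.symm, by simp⟩)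
    · obtain ⟨rfl, rfl⟩ := cons_eq_cons.mp h
      exact .inr (.inl ⟨m₁, m₂, rfl, rfl, rfl⟩)
    · exact .inr (.inr h)
  · rintro (⟨p', rfl, rfl⟩ | ⟨m₁, m₂, rfl, rfl, rfl⟩ | ⟨q', rfl, rfl⟩) <;> simp

end List

def Language.cyclicPermutations {T : Type*} (L : Language T) : Language T :=
  {w | ∃ x y : List T, w = y ++ x ∧ x ++ y ∈ L}

namespace Symbol
variable {T N N' : Type*}

@[simp] def mapNT (φ : N → N') : Symbol T N → Symbol T N'
  | terminal a => terminal a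
  | nonterminal A => nonterminal (φ A)

@[simp] lemma mapNT_comp_terminal (φ : N → N') :
    mapNT φ ∘ terminal = (terminal : T → Symbol T N') :=
  rfl

@[simp] def interp (f : N → Language T) : Symbol T N → Language T
  | terminal a => {[a]}
  | nonterminal A => f A

end Symbol

namespace ContextFreeGrammar
open Symbol

variable {T : Type*}

section interp
variable {N : Type*}

def interp (f : N → Language T) (s : List (Symbol T N)) : Language T :=
  (s.map (Symbol.interp f)).prod

@[simp] lemma interp_nil (f : N → Language T) : interp f [] = 1 := rfl

@[simp] lemma interp_cons (f : N → Language T) (X : Symbol T N) (s : List (Symbol T N)) :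
    interp f (X :: s) = X.interp f * interp f s := List.prod_cons

@[simp] lemma interp_append (f : N → Language T) (s t : List (Symbol T N)) :
    interp f (s ++ t) = interp f s * interp f t := by
  simp [interp]

lemma mem_interp_map_terminal (f : N → Language T) (w : List T) :
    w ∈ interp f (w.map terminal) := by
  induction w with
  | nil => exact rfl
  | cons a w ih => exact Language.mem_mul.mpr ⟨[a], rfl, w, ih, rfl⟩

lemma interp_map_mapNT {N' : Type*} (f : N' → Language T) (φ : N → N') (s : List (Symbol T N)) :
    interp f (s.map (mapNT φ)) = interp (f ∘ φ) s := by
  simp only [interp, List.map_map]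
  congr 2
  funext X
  cases X <;> rfl

end interp

variable {g : ContextFreeGrammar T}

lemma Derives.append {u₁ u₂ v₁ v₂ : List (Symbol T g.NT)} (h₁ : g.Derives u₁ v₁)
    (h₂ : g.Derives u₂ v₂) : g.Derives (u₁ ++ u₂) (v₁ ++ v₂) :=
  (h₁.append_right u₂).trans (h₂.append_left v₁)

lemma Produces.input_output {r : ContextFreeRule T g.NT} (hr : r ∈ g.rules) :
    g.Produces [nonterminal r.input] r.output :=
  ⟨r, hr, ContextFreeRule.Rewrites.input_output⟩

lemma produces_of_mem_rules {r : ContextFreeRule T g.NT} (hr : r ∈ g.rules)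
    (p q : List (Symbol T g.NT)) :
    g.Produces (p ++ [nonterminal r.input] ++ q) (p ++ r.output ++ q) :=
  ⟨r, hr, r.rewrites_of_exists_parts p q⟩

lemma interp_le_of_derives {f : g.NT → Language T}
    (hf : ∀ r ∈ g.rules, interp f r.output ≤ f r.input) {u v : List (Symbol T g.NT)}
    (h : g.Derives u v) : interp f v ≤ interp f u := by
  induction h with
  | refl => rfl
  | tail _ hp ih =>
    obtain ⟨r, hr, hrw⟩ := hp
    obtain ⟨p, q, rfl, rfl⟩ := hrw.exists_parts
    refine le_trans ?_ ih
    simp only [interp_append, interp_cons, interp_nil, Symbol.interp, mul_one]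
    gcongr
    exact hf r hr

theorem language_le_of_rules {f : g.NT → Language T}
    (hf : ∀ r ∈ g.rules, interp f r.output ≤ f r.input) : g.language ≤ f g.initial := by
  intro w hw
  simpa using interp_le_of_derives hf hw (mem_interp_map_terminal f w)

def langOf (g : ContextFreeGrammar T) (s : List (Symbol T g.NT)) : Language T :=
  {w | g.Derives s (w.map terminal)}

lemma interp_langOf_le (s : List (Symbol T g.NT)) :
    interp (fun A => g.langOf [nonterminal A]) s ≤ g.langOf s := by
  induction s with
  | nil => rintro _ rfl; exact Derives.refl _
  | cons X s ih =>
    rintro _ ⟨w₁, h₁, w₂, h₂, rfl⟩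
    have hX : g.Derives [X] (w₁.map terminal) := by
      cases X with
      | terminal a => rcases h₁ with rfl; exact Derives.refl _
      | nonterminal A => exact h₁
    simpa [langOf] using hX.append (ih h₂)

lemma Produces.map {g' : ContextFreeGrammar T} {φ : g.NT → g'.NT}
    (hφ : ∀ r ∈ g.rules, ⟨φ r.input, r.output.map (mapNT φ)⟩ ∈ g'.rules)
    {u v : List (Symbol T g.NT)} (h : g.Produces u v) :
    g'.Produces (u.map (mapNT φ)) (v.map (mapNT φ)) := by
  obtain ⟨r, hr, hrw⟩ := h
  obtain ⟨p, q, rfl, rfl⟩ := hrw.exists_parts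
  simpa [Symbol.mapNT] using produces_of_mem_rules (hφ r hr) (p.map (mapNT φ)) (q.map (mapNT φ))

/-- Nonterminals of the grammar of cyclic permutations: `orig A` is a copy of `A`, and `ctx A`
generates the rotated contexts `v ++ u` of the occurrences `u A v` in the sentential forms of
the original grammar. -/
inductive CyclicNT (N : Type) : Type
  | start
  | orig (A : N)
  | ctx (A : N)

namespace CyclicNT
variable {N : Type}

abbrev lift (s : List (Symbol T N)) : List (Symbol T (CyclicNT N)) := s.map (mapNT orig)

/-- For `A → α C β`, a rotated context of this occurrence of `C` is `β`, a rotated context of `A`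
and `α`, in this order. With `X = start` the pivot is instead the cut of `A → α β` between `α`
and `β`, where a rotation begins. -/
def pivotRule (X : CyclicNT N) (A : N) (α β : List (Symbol T N)) :
    ContextFreeRule T (CyclicNT N) :=
  ⟨X, lift β ++ [nonterminal (ctx A)] ++ lift α⟩

def rulesOf (r : ContextFreeRule T N) : List (ContextFreeRule T (CyclicNT N)) :=
  ⟨orig r.input, lift r.output⟩ :: (r.output.inits.zip r.output.tails).flatMap fun (α, β) =>
    pivotRule start r.input α β :: match β with
      | nonterminal C :: β' => [pivotRule (ctx C) r.input α β']
      | _ => []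

lemma mem_rulesOf {r : ContextFreeRule T N} {r' : ContextFreeRule T (CyclicNT N)} :
    r' ∈ rulesOf r ↔ r' = ⟨orig r.input, lift r.output⟩ ∨
      (∃ α β, r.output = α ++ β ∧ r' = pivotRule start r.input α β) ∨
      (∃ α C β, r.output = α ++ nonterminal C :: β ∧ r' = pivotRule (ctx C) r.input α β) := by
  simp only [rulesOf, List.mem_cons, List.mem_flatMap, Prod.exists, List.mem_zip_inits_tails]
  refine or_congr_right ⟨?_, ?_⟩
  · rintro ⟨α, β, hout, rfl | hr'⟩
    · exact .inl ⟨α, β, hout.symm, rfl⟩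
    · rcases β with _ | ⟨_ | C, β⟩ <;> simp only [List.not_mem_nil, List.mem_singleton] at hr'
      exact .inr ⟨α, C, β, hout.symm, hr'⟩
  · rintro (⟨α, β, hout, rfl⟩ | ⟨α, C, β, hout, rfl⟩)
    · exact ⟨α, β, hout.symm, .inl rfl⟩
    · exact ⟨α, _, hout.symm, .inr (List.mem_singleton_self _)⟩

end CyclicNT

open CyclicNT

variable (g : ContextFreeGrammar T)

open Classical in
noncomputable abbrev cyclicPermutations : ContextFreeGrammar T where
  NT := CyclicNT g.NT
  initial := start
  rules := {⟨start, [nonterminal (orig g.initial)]⟩, ⟨ctx g.initial, []⟩} ∪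
    g.rules.biUnion fun r => (rulesOf r).toFinset

variable {g}

lemma mem_cyclicPermutations_rules {r' : ContextFreeRule T (CyclicNT g.NT)} :
    r' ∈ g.cyclicPermutations.rules ↔ r' = ⟨start, [nonterminal (orig g.initial)]⟩ ∨
      r' = ⟨ctx g.initial, []⟩ ∨ ∃ r ∈ g.rules, r' ∈ rulesOf r := by
  simp only [Finset.mem_union, Finset.mem_insert, Finset.mem_singleton,
    Finset.mem_biUnion, List.mem_toFinset, or_assoc]

lemma orig_mem_cyclicPermutations_rules {r : ContextFreeRule T g.NT} (hr : r ∈ g.rules) :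
    ⟨orig r.input, lift r.output⟩ ∈ g.cyclicPermutations.rules :=
  mem_cyclicPermutations_rules.mpr (.inr (.inr ⟨r, hr, mem_rulesOf.mpr (.inl rfl)⟩))

variable (g) in
def cyclicInterp : CyclicNT g.NT → Language T
  | start => g.language.cyclicPermutations
  | orig A => g.langOf [nonterminal A]
  | ctx A => {w | ∃ u v, w = v ++ u ∧
      g.Derives [nonterminal g.initial] (u.map terminal ++ [nonterminal A] ++ v.map terminal)}

lemma Derives.trans_pivot {r : ContextFreeRule T g.NT} (hr : r ∈ g.rules)
    {s p q α β γ α' β' : List (Symbol T g.NT)} (hout : r.output = α ++ γ ++ β)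
    (h : g.Derives s (p ++ [nonterminal r.input] ++ q)) (hα : g.Derives α α')
    (hβ : g.Derives β β') : g.Derives s (p ++ α' ++ γ ++ β' ++ q) := by
  refine (h.trans_produces (produces_of_mem_rules hr p q)).trans ?_
  rw [hout]
  simpa only [List.append_assoc] using
    (((hα.append (Derives.refl γ)).append hβ).append_left p).append_right q

lemma interp_lift_le (s : List (Symbol T g.NT)) :
    interp g.cyclicInterp (lift s) ≤ g.langOf s := by
  rw [interp_map_mapNT]
  exact interp_langOf_le s

lemma mem_interp_pivotRule {X : CyclicNT g.NT} {A : g.NT} {α β : List (Symbol T g.NT)}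
    {w : List T} (hw : w ∈ interp g.cyclicInterp (pivotRule X A α β).output) :
    ∃ x₂ y₁ u v, w = y₁ ++ v ++ u ++ x₂ ∧ g.Derives α (x₂.map terminal) ∧
      g.Derives β (y₁.map terminal) ∧
      g.Derives [nonterminal g.initial] (u.map terminal ++ [nonterminal A] ++ v.map terminal) := by
  simp only [pivotRule, interp_append, interp_cons, interp_nil, Symbol.interp, mul_one] at hw
  obtain ⟨_, ⟨y₁, hy₁, _, ⟨u, v, rfl, huv⟩, rfl⟩, x₂, hx₂, rfl⟩ := hw
  exact ⟨x₂, y₁, u, v, by simp, interp_lift_le α hx₂, interp_lift_le β hy₁, huv⟩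

lemma cyclicInterp_sound {r' : ContextFreeRule T (CyclicNT g.NT)}
    (hr' : r' ∈ g.cyclicPermutations.rules) :
    interp g.cyclicInterp r'.output ≤ g.cyclicInterp r'.input := by
  rcases mem_cyclicPermutations_rules.mp hr' with rfl | rfl | ⟨r, hr, hr'⟩
  · intro w hw
    simp only [interp_cons, interp_nil, mul_one, Symbol.interp, cyclicInterp] at hw
    exact ⟨w, [], by simp, by simpa [langOf] using hw⟩
  · rintro _ rfl
    exact ⟨[], [], rfl, by simpa using Derives.refl _⟩
  rcases mem_rulesOf.mp hr' with rfl | ⟨α, β, hout, rfl⟩ | ⟨α, C, β, hout, rfl⟩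
  · intro w hw
    exact (Produces.input_output hr).trans_derives (interp_lift_le _ hw)
  · intro w hw
    obtain ⟨x₂, y₁, u, v, rfl, hα, hβ, huv⟩ := mem_interp_pivotRule hw
    refine ⟨u ++ x₂, y₁ ++ v, by simp, ?_⟩
    simpa using huv.trans_pivot hr (γ := []) (by simpa using hout) hα hβ
  · intro w hw
    obtain ⟨x₂, y₁, u, v, rfl, hα, hβ, huv⟩ := mem_interp_pivotRule hw
    refine ⟨u ++ x₂, y₁ ++ v, by simp, ?_⟩
    simpa using huv.trans_pivot hr (γ := [nonterminal C]) (by simpa using hout) hα hβ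

theorem cyclicPermutations_language_le :
    g.cyclicPermutations.language ≤ g.language.cyclicPermutations :=
  language_le_of_rules fun _ => cyclicInterp_sound

lemma Produces.lift {u v : List (Symbol T g.NT)} (h : g.Produces u v) :
    g.cyclicPermutations.Produces (lift u) (lift v) :=
  h.map fun _ hr => orig_mem_cyclicPermutations_rules hr

lemma pivotRule_start_mem {r : ContextFreeRule T g.NT} (hr : r ∈ g.rules)
    {α β : List (Symbol T g.NT)} (hout : r.output = α ++ β) :
    pivotRule start r.input α β ∈ g.cyclicPermutations.rules :=
  mem_cyclicPermutations_rules.mpr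
    (.inr (.inr ⟨r, hr, mem_rulesOf.mpr (.inr (.inl ⟨α, β, hout, rfl⟩))⟩))

lemma pivotRule_ctx_mem {r : ContextFreeRule T g.NT} (hr : r ∈ g.rules)
    {α β : List (Symbol T g.NT)} {C : g.NT} (hout : r.output = α ++ nonterminal C :: β) :
    pivotRule (ctx C) r.input α β ∈ g.cyclicPermutations.rules :=
  mem_cyclicPermutations_rules.mpr
    (.inr (.inr ⟨r, hr, mem_rulesOf.mpr (.inr (.inr ⟨α, C, β, hout, rfl⟩))⟩))

lemma derives_ctx_of_derives {s : List (Symbol T g.NT)}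
    (h : g.Derives [nonterminal g.initial] s) {u v : List (Symbol T g.NT)} {A : g.NT}
    (hs : s = u ++ nonterminal A :: v) :
    g.cyclicPermutations.Derives [nonterminal (ctx A)] (lift v ++ lift u) := by
  induction h generalizing u A v with
  | refl =>
    obtain ⟨rfl, h⟩ | ⟨-, h⟩ := List.singleton_eq_append_iff.mp hs
    · obtain ⟨⟨⟩, rfl⟩ := List.cons_eq_cons.mp h.symm
      exact (Produces.input_output (mem_cyclicPermutations_rules.mpr (.inr (.inl rfl)))).single
    · exact absurd h (List.cons_ne_nil _ _)
  | tail _ hp ih =>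
    obtain ⟨r, hr, hrw⟩ := hp
    obtain ⟨p, q, rfl, rfl⟩ := hrw.exists_parts
    rcases List.append_cons_eq_append_append_iff.mp hs.symm with
      ⟨p', rfl, rfl⟩ | ⟨α, β, hout, rfl, rfl⟩ | ⟨q', rfl, rfl⟩
    · have step := ((produces_of_mem_rules hr p' q).lift).append_right (lift u)
      exact (ih (v := p' ++ [nonterminal r.input] ++ q) (by simp)).trans_produces step
    · have := ((ih (u := p) (v := q) (A := r.input) (by simp)).append_left
        (lift β)).append_right (lift α)
      exact (Produces.input_output (pivotRule_ctx_mem hr hout)).trans_derives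
        (by simpa [pivotRule] using this)
    · have step := ((produces_of_mem_rules hr p q').lift).append_left (lift v)
      exact (ih (u := p ++ [nonterminal r.input] ++ q') (by simp)).trans_produces step

lemma derives_start_of_derives {s : List (Symbol T g.NT)}
    (h : g.Derives [nonterminal g.initial] s) {s₁ s₂ : List (Symbol T g.NT)}
    (hs : s = s₁ ++ s₂) :
    g.cyclicPermutations.Derives [nonterminal start] (lift s₂ ++ lift s₁) := by
  induction h generalizing s₁ s₂ with
  | refl =>
    have init : g.cyclicPermutations.Derives [nonterminal start] [nonterminal (orig g.initial)] :=
      (Produces.input_output (mem_cyclicPermutations_rules.mpr (.inl rfl))).single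
    rcases List.singleton_eq_append_iff.mp hs with ⟨rfl, rfl⟩ | ⟨rfl, rfl⟩ <;> simpa using init
  | tail hd hp ih =>
    obtain ⟨r, hr, hrw⟩ := hp
    obtain ⟨p, q, rfl, rfl⟩ := hrw.exists_parts
    rcases List.append_eq_append_append_iff.mp hs.symm with
      ⟨p', rfl, rfl⟩ | ⟨α, β, hout, rfl, rfl⟩ | ⟨q', rfl, rfl⟩
    · have step := ((produces_of_mem_rules hr p' q).lift).append_right (lift s₁)
      exact (ih (s₂ := p' ++ [nonterminal r.input] ++ q) (by simp)).trans_produces step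
    · have := ((derives_ctx_of_derives hd (u := p) (v := q) (A := r.input) (by simp)).append_left
        (lift β)).append_right (lift α)
      exact (Produces.input_output (pivotRule_start_mem hr hout)).trans_derives
        (by simpa [pivotRule] using this)
    · have step := ((produces_of_mem_rules hr p q').lift).append_left (lift s₂)
      exact (ih (s₁ := p ++ [nonterminal r.input] ++ q') (by simp)).trans_produces step

theorem le_cyclicPermutations_language :
    g.language.cyclicPermutations ≤ g.cyclicPermutations.language := by
  rintro _ ⟨x, y, rfl, hxy⟩
  refine (mem_language_iff _ _).mpr ?_
  simpa using derives_start_of_derives hxy (s₁ := x.map terminal) (s₂ := y.map terminal) (by simp)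

end ContextFreeGrammar

theorem cyclic_permutations_contextFree_general {T : Type} (L : Language T)
    (hL : L.IsContextFree) :
    Language.IsContextFree {w : List T | ∃ x y : List T, w = y ++ x ∧ x ++ y ∈ L} := by
  obtain ⟨g, rfl⟩ := hL
  exact ⟨g.cyclicPermutations,
    le_antisymm g.cyclicPermutations_language_le g.le_cyclicPermutations_language⟩

theorem cyclic_permutations_contextFree {T : Type} [Fintype T] (L : Language T)
    (hL : L.IsContextFree) :
    Language.IsContextFree {w : List T | ∃ x y : List T, w = y ++ x ∧ x ++ y ∈ L} :=
  cyclic_permutations_contextFree_general L hL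
end

section
/- Let G be a group and X a finite subset of G with 1 ∉ X and Subgroup.closure X = ⊤. Then the subgroup of Equiv.Perm G generated by the left translations Equiv.mulLeft x for x ∈ X together with the transpositions Equiv.swap 1 x for x ∈ X is exactly H(G), i.e. its carrier is the set of all permutations σ of G for which there exists g ∈ G with {y : G | σ y ≠ g * y} finite. -/
/-!
The left translations by `X` generate all of `G` acting on itself, since `g ↦ mulLeft g` is a
homomorphism and `X` generates `G`. Conjugating `swap 1 x` by translations and chaining
transpositions along words in `X` then puts every transposition `swap a b` into the subgroup,
hence every finitary permutation. A permutation agreeing with `mulLeft g` off a finite set is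
`mulLeft g` times a finitary permutation, and conversely such permutations form a subgroup
containing all the generators.
-/

open Equiv MulAction Subgroup

section

variable (G : Type*) [Group G]

/-- The group `H(G)`. -/
def almostTranslations : Subgroup (Perm G) where
  carrier := {σ | ∃ g : G, {y : G | σ y ≠ g * y}.Finite}
  one_mem' := ⟨1, by simp⟩
  mul_mem' := by
    rintro σ τ ⟨g, hg⟩ ⟨h, hh⟩
    refine ⟨g * h, (hh.union (hg.preimage τ.injective.injOn)).subset fun y hy ↦ ?_⟩
    by_contra hyτ
    simp only [Set.mem_union, Set.mem_preimage, Set.mem_ofPred_eq, not_or, not_not] at hyτ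
    exact hy (by rw [Perm.mul_apply, hyτ.2, hyτ.1, mul_assoc])
  inv_mem' := by
    rintro σ ⟨g, hg⟩
    refine ⟨g⁻¹, (hg.image σ).subset fun y hy ↦ ⟨σ⁻¹ y, fun hσ ↦ hy ?_, σ.apply_symm_apply y⟩⟩
    exact eq_inv_mul_iff_mul_eq.mpr (hσ.symm.trans (σ.apply_symm_apply y))

variable {G}

theorem mem_almostTranslations_of_finite_compl_fixedBy {σ : Perm G}
    (hσ : (fixedBy G σ)ᶜ.Finite) : σ ∈ almostTranslations G :=
  ⟨1, hσ.subset fun y hy ↦ by simpa using hy⟩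

theorem mulLeft_mem_almostTranslations (g : G) : Equiv.mulLeft g ∈ almostTranslations G :=
  ⟨g, by simp⟩

theorem finite_compl_fixedBy_mulLeft_inv_mul {σ : Perm G} {g : G}
    (hσ : {y : G | σ y ≠ g * y}.Finite) : (fixedBy G ((Equiv.mulLeft g)⁻¹ * σ))ᶜ.Finite := by
  refine hσ.subset fun y hy hσy ↦ hy ?_
  simp [Perm.smul_def, Perm.mul_apply, Perm.inv_def, hσy]

theorem mulLeft_mem_closure_image {X : Set G} (hX : Subgroup.closure X = ⊤) (g : G) :
    Equiv.mulLeft g ∈ Subgroup.closure (Equiv.mulLeft '' X) := by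
  show toPermHom G G g ∈ Subgroup.closure (toPermHom G G '' X)
  rw [← MonoidHom.map_closure, hX]
  exact mem_map_of_mem _ (mem_top g)

end

section

variable {G : Type*} [Group G] [DecidableEq G] {S : Subgroup (Perm G)}

theorem swap_mul_mul_mem (hS : ∀ g, Equiv.mulLeft g ∈ S) {a b : G} (hab : swap a b ∈ S)
    (g : G) : swap (g * a) (g * b) ∈ S := by
  rw [show g * a = Equiv.mulLeft g a from rfl, show g * b = Equiv.mulLeft g b from rfl,
    swap_apply_apply]
  exact mul_mem (mul_mem (hS g) hab) (inv_mem (hS g))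

/-- By left-invariance `swap 1 g ∈ S` gives `swap h (h * g) ∈ S`, and transpositions chain:
`swap 1 h, swap h (h * g) ∈ S` give `swap 1 (h * g) ∈ S`. -/
theorem swap_mem_of_closure_eq_top (hS : ∀ g, Equiv.mulLeft g ∈ S) {X : Set G}
    (hX : Subgroup.closure X = ⊤) (hXS : ∀ x ∈ X, swap 1 x ∈ S) (a b : G) : swap a b ∈ S := by
  have hone : ∀ g : G, swap 1 g ∈ S := fun g ↦ by
    induction (hX ▸ mem_top g : g ∈ Subgroup.closure X) using closure_induction with
    | mem x hx => exact hXS x hx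
    | one => exact swap_self (1 : G) ▸ S.one_mem
    | mul g h _ _ hg hh =>
      refine SubmonoidClass.swap_mem_trans S hg ?_
      simpa only [mul_one] using swap_mul_mul_mem hS hh g
    | inv g _ hg =>
      rw [swap_comm]
      simpa only [mul_one, inv_mul_cancel] using swap_mul_mul_mem hS hg g⁻¹
  simpa only [mul_one, mul_inv_cancel_left] using swap_mul_mul_mem hS (hone (a⁻¹ * b)) a

theorem almostTranslations_le (hS : ∀ g, Equiv.mulLeft g ∈ S)
    (hswap : ∀ a b : G, swap a b ∈ S) : almostTranslations G ≤ S := by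
  rintro σ ⟨g, hg⟩
  have hfin : (Equiv.mulLeft g)⁻¹ * σ ∈ S := by
    refine closure_le S |>.mpr ?_ <|
      mem_closure_isSwap'.mpr (finite_compl_fixedBy_mulLeft_inv_mul hg)
    rintro _ ⟨a, b, -, rfl⟩
    exact hswap a b
  simpa only [mul_inv_cancel_left] using mul_mem (hS g) hfin

end

theorem closure_translations_and_swaps_eq_HG_general (G : Type*) [Group G] [DecidableEq G]
    (X : Finset G)
    (hX : Subgroup.closure (X : Set G) = ⊤) :
    ((Subgroup.closure
        ((fun x : G => Equiv.mulLeft x) '' (X : Set G) ∪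
          (fun x : G => Equiv.swap (1 : G) x) '' (X : Set G))) :
      Set (Equiv.Perm G)) =
    {σ : Equiv.Perm G | ∃ g : G, {y : G | σ y ≠ g * y}.Finite} := by
  set S := Subgroup.closure (Equiv.mulLeft '' (X : Set G) ∪ (swap 1) '' (X : Set G))
  have hS : ∀ g, Equiv.mulLeft g ∈ S := fun g ↦
    closure_mono Set.subset_union_left (mulLeft_mem_closure_image hX g)
  have hswap : ∀ a b : G, swap a b ∈ S :=
    swap_mem_of_closure_eq_top hS hX fun x hx ↦ subset_closure (Or.inr ⟨x, hx, rfl⟩)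
  have hgen : S ≤ almostTranslations G := by
    refine closure_le _ |>.mpr (Set.union_subset ?_ ?_)
    · rintro _ ⟨x, -, rfl⟩
      exact mulLeft_mem_almostTranslations x
    · rintro _ ⟨x, -, rfl⟩
      exact mem_almostTranslations_of_finite_compl_fixedBy finite_compl_fixedBy_swap
  exact congrArg SetLike.coe (le_antisymm hgen (almostTranslations_le hS hswap))

theorem closure_translations_and_swaps_eq_HG (G : Type*) [Group G] [DecidableEq G]
    (X : Finset G) (h1 : (1 : G) ∉ X)
    (hX : Subgroup.closure (X : Set G) = ⊤) :
    ((Subgroup.closure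
        ((fun x : G => Equiv.mulLeft x) '' (X : Set G) ∪
          (fun x : G => Equiv.swap (1 : G) x) '' (X : Set G))) :
      Set (Equiv.Perm G)) =
    {σ : Equiv.Perm G | ∃ g : G, {y : G | σ y ≠ g * y}.Finite} :=
  closure_translations_and_swaps_eq_HG_general G X hX
end

section
/- Fix n ≥ 2 and let Φ be a quasi-automorphism of the n-star *_0^n (vertex set Fin n × ℕ with adjacency (i,k) ~ (j,l) iff i = j and (l = k + 1 or k = l + 1)). Then there exist r : ℕ, s : Fin n → ℤ, and a permutation φ of Fin n such that for every l : Fin n and every k > r one has (Φ (l,k)).1 = φ l and ((Φ (l,k)).2 : ℤ) = (k : ℤ) + s l; moreover ∑ l, s l = 0. -/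
/-!
Away from a finite set of vertices Φ preserves adjacency, so for `R` large enough each ray
`k ↦ Φ (l, R + k)` is an injective path in the star. Such a path cannot backtrack, so it stays
on one branch and its level changes by the same `±1` at every step; it cannot descend forever in
`ℕ`, so it climbs: `Φ (l, R + k) = (φ l, t l + k)`. Two rays climbing the same branch would meet,
so `φ` is a permutation. Finally `Φ` maps the `n * R` vertices below level `R` bijectively onto
the complement of the image rays, which has `∑ l, t l` vertices; hence `∑ l, (t l - R) = 0`.
-/

open Finset

/-- Adjacency on the `n`-star `*_0^n`: `(i,k) ~ (j,l)` iff `i = j` and the levels are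
consecutive. -/
def StarAdj {n : ℕ} (u v : Fin n × ℕ) : Prop :=
  u.1 = v.1 ∧ (v.2 = u.2 + 1 ∨ u.2 = v.2 + 1)

theorem StarAdj.level_sub_eq_of_ne {n : ℕ} {u v w : Fin n × ℕ} (huv : StarAdj u v)
    (hvw : StarAdj v w) (huw : u ≠ w) : (w.2 : ℤ) - v.2 = v.2 - u.2 := by
  have hlevel : u.2 ≠ w.2 := fun h => huw (Prod.ext (huv.1.trans hvw.1) h)
  have := huv.2
  have := hvw.2
  omega

theorem eq_of_injective_of_starAdj_succ {n : ℕ} {f : ℕ → Fin n × ℕ} (hf : f.Injective)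
    (hadj : ∀ k, StarAdj (f k) (f (k + 1))) (k : ℕ) : f k = ((f 0).1, (f 0).2 + k) := by
  have hbranch : ∀ k, (f k).1 = (f 0).1 := by
    intro k
    induction k with
    | zero => rfl
    | succ k ih => rw [← (hadj k).1, ih]
  set d : ℤ := (f 1).2 - (f 0).2
  have hstep : ∀ k, ((f (k + 1)).2 : ℤ) - (f k).2 = d := by
    intro k
    induction k with
    | zero => rfl
    | succ k ih => rw [← ih, (hadj k).level_sub_eq_of_ne (hadj (k + 1)) (hf.ne (by omega))]
  have hlevel : ∀ k, ((f k).2 : ℤ) = (f 0).2 + k * d := by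
    intro k
    induction k with
    | zero => simp
    | succ k ih => push_cast; linarith [hstep k]
  have hd : d = 1 := by
    rcases (hadj 0).2 with h | h <;> rw [zero_add] at h
    · omega
    · have hdown : d = -1 := by omega
      have := hlevel ((f 0).2 + 1)
      rw [hdown] at this
      push_cast at this
      omega
  refine Prod.ext (hbranch k) ?_
  have := hlevel k
  rw [hd] at this
  simp only
  omega

theorem exists_starAdj_apply_succ {n : ℕ} (Φ : Equiv.Perm (Fin n × ℕ))
    (hΦ : {p : (Fin n × ℕ) × (Fin n × ℕ) |
            ¬ (StarAdj p.1 p.2 ↔ StarAdj (Φ p.1) (Φ p.2))}.Finite) :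
    ∃ R, ∀ l k, R ≤ k → StarAdj (Φ (l, k)) (Φ (l, k + 1)) := by
  obtain ⟨R, hR⟩ := (hΦ.image fun p => p.1.2).bddAbove
  refine ⟨R + 1, fun l k hk => ?_⟩
  by_contra hna
  have hadj : StarAdj ((l, k) : Fin n × ℕ) (l, k + 1) := ⟨rfl, Or.inl rfl⟩
  have : k ≤ R := hR ⟨((l, k), (l, k + 1)), fun h => hna (h.1 hadj), rfl⟩
  omega

def belowGraph {ι : Type*} [Fintype ι] (u : ι → ℕ) : Finset (ι × ℕ) :=
  (univ.sigma fun i => range (u i)).map (Equiv.sigmaEquivProd ι ℕ).toEmbedding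

section belowGraph

variable {ι : Type*} [Fintype ι]

theorem mem_belowGraph {u : ι → ℕ} {p : ι × ℕ} : p ∈ belowGraph u ↔ p.2 < u p.1 := by
  simp [belowGraph]

theorem card_belowGraph (u : ι → ℕ) : #(belowGraph u) = ∑ i, u i := by
  simp [belowGraph, card_sigma]

end belowGraph

section ClimbingRays

variable {ι : Type*} {Φ : Equiv.Perm (ι × ℕ)} {R : ℕ} {c : ι → ι} {t : ι → ℕ}

theorem injective_of_apply_add (h : ∀ l j, Φ (l, R + j) = (c l, t l + j)) : c.Injective := by
  intro l l' hc
  have hmeet : Φ (l, R + t l') = Φ (l', R + t l) := by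
    rw [h, h, hc, add_comm]
  exact congrArg Prod.fst (Φ.injective hmeet)

theorem card_mul_eq_sum_of_apply_add [Fintype ι] (h : ∀ l j, Φ (l, R + j) = (c l, t l + j)) :
    Fintype.card ι * R = ∑ l, t l := by
  set φ := Equiv.ofBijective c (Finite.injective_iff_bijective.mp (injective_of_apply_add h))
  have hφ : ∀ l j, Φ (l, R + j) = (φ l, t l + j) := h
  have hmem : ∀ p, Φ p ∈ belowGraph (t ∘ φ.symm) ↔ p ∈ belowGraph fun _ => R := by
    rintro ⟨l, k⟩
    simp only [mem_belowGraph, Function.comp_apply]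
    constructor
    · intro hlt
      by_contra! hk
      obtain ⟨j, rfl⟩ := Nat.exists_eq_add_of_le hk
      simp [hφ] at hlt
    · intro hk
      by_contra! hge
      set l' := φ.symm (Φ (l, k)).1
      obtain ⟨j, hj⟩ := Nat.exists_eq_add_of_le hge
      have hback : Φ (l', R + j) = Φ (l, k) := by rw [hφ, Equiv.apply_symm_apply, ← hj]
      have := congrArg Prod.snd (Φ.injective hback)
      simp only at this
      omega
  have himage : (belowGraph fun _ => R).map Φ.toEmbedding = belowGraph (t ∘ φ.symm) := by
    ext q
    rw [mem_map_equiv, ← hmem, Equiv.apply_symm_apply]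
  calc Fintype.card ι * R = #(belowGraph fun _ : ι => R) := by simp [card_belowGraph]
    _ = #(belowGraph (t ∘ φ.symm)) := by rw [← himage, card_map]
    _ = ∑ l, t l := by rw [card_belowGraph, Function.comp_def, Equiv.sum_comp φ.symm t]

end ClimbingRays

theorem quasiAut_star_eventually_shift_general (n : ℕ)
    (Φ : Equiv.Perm (Fin n × ℕ))
    (hΦ : {p : (Fin n × ℕ) × (Fin n × ℕ) |
            ¬ (StarAdj p.1 p.2 ↔ StarAdj (Φ p.1) (Φ p.2))}.Finite) :
    ∃ (r : ℕ) (s : Fin n → ℤ) (φ : Equiv.Perm (Fin n)),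
      (∀ (l : Fin n) (k : ℕ), r < k →
        (Φ (l, k)).1 = φ l ∧ ((Φ (l, k)).2 : ℤ) = (k : ℤ) + s l) ∧
      (∑ l, s l) = 0 := by
  obtain ⟨R, hR⟩ := exists_starAdj_apply_succ Φ hΦ
  set c : Fin n → Fin n := fun l => (Φ (l, R)).1
  set t : Fin n → ℕ := fun l => (Φ (l, R)).2
  have hray : ∀ l j, Φ (l, R + j) = (c l, t l + j) := fun l j => by
    simpa using eq_of_injective_of_starAdj_succ (f := fun j => Φ (l, R + j))
      (Φ.injective.comp fun _ _ h => by simpa using h) (fun j => hR l (R + j) (by omega)) j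
  have hc := injective_of_apply_add hray
  refine ⟨R, fun l => t l - R, Equiv.ofBijective c (Finite.injective_iff_bijective.mp hc), ?_, ?_⟩
  · intro l k hk
    obtain ⟨j, rfl⟩ := Nat.exists_eq_add_of_le hk.le
    rw [hray]
    exact ⟨rfl, by push_cast; ring⟩
  · have hcard := card_mul_eq_sum_of_apply_add hray
    rw [Fintype.card_fin] at hcard
    rw [sum_sub_distrib, ← Nat.cast_sum, ← hcard]
    simp

theorem quasiAut_star_eventually_shift (n : ℕ) (hn : 2 ≤ n)
    (Φ : Equiv.Perm (Fin n × ℕ))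
    (hΦ : {p : (Fin n × ℕ) × (Fin n × ℕ) |
            ¬ (StarAdj p.1 p.2 ↔ StarAdj (Φ p.1) (Φ p.2))}.Finite) :
    ∃ (r : ℕ) (s : Fin n → ℤ) (φ : Equiv.Perm (Fin n)),
      (∀ (l : Fin n) (k : ℕ), r < k →
        (Φ (l, k)).1 = φ l ∧ ((Φ (l, k)).2 : ℤ) = (k : ℤ) + s l) ∧
      (∑ l, s l) = 0 :=
  quasiAut_star_eventually_shift_general n Φ hΦ
end

section
/- Fix n ≥ 3. In Equiv.Perm (Option (Fin n × ℕ)), the subgroup generated by the shifts s_0, …, s_{n-1} is exactly the Houghton group H_n in the star-with-center model: its carrier is the set of all permutations σ for which there exist N : ℕ and s : Fin n → ℤ with ∑ i, s i = 0 such that for every i : Fin n and every k ≥ N, σ (some (i,k)) = some (i, m) with (m : ℤ) = (k : ℤ) + s i. -/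
/-- Modular successor on `Fin n`. -/
def fsucc {n : ℕ} (i : Fin n) : Fin n :=
  ⟨(i.val + 1) % n, Nat.mod_lt _ (Nat.lt_of_le_of_lt (Nat.zero_le _) i.isLt)⟩

lemma fsucc_ne {n : ℕ} (hn : 2 ≤ n) (i : Fin n) : fsucc i ≠ i := by
  rcases Nat.lt_or_ge (i.val + 1) n with h | h
  · intro he
    have : (i.val + 1) % n = i.val := congrArg Fin.val he
    rw [Nat.mod_eq_of_lt h] at this
    omega
  · intro he
    have hi := i.isLt
    have hn1 : i.val + 1 = n := by omega
    have : (i.val + 1) % n = i.val := congrArg Fin.val he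
    rw [hn1, Nat.mod_self] at this
    omega

/-- The underlying function of the shift `s_i` on the star `*^n` with center `none`. -/
def shiftFun {n : ℕ} (i : Fin n) : Option (Fin n × ℕ) → Option (Fin n × ℕ)
  | none => some (fsucc i, 0)
  | some (l, k) =>
      if l = i then (match k with | 0 => none | Nat.succ k' => some (i, k'))
      else if l = fsucc i then some (fsucc i, k + 1)
      else some (l, k)

/-- The inverse of `shiftFun i`. -/
def shiftInvFun {n : ℕ} (i : Fin n) : Option (Fin n × ℕ) → Option (Fin n × ℕ)
  | none => some (i, 0)
  | some (l, k) =>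
      if l = i then some (i, k + 1)
      else if l = fsucc i then (match k with | 0 => none | Nat.succ k' => some (fsucc i, k'))
      else some (l, k)

/-- The shift `s_i`, as a permutation of the star `*^n`. -/
def shift {n : ℕ} (hn : 2 ≤ n) (i : Fin n) : Equiv.Perm (Option (Fin n × ℕ)) where
  toFun := shiftFun i
  invFun := shiftInvFun i
  left_inv := by
    have hs := fsucc_ne hn i
    rintro (_ | ⟨l, k⟩)
    · simp [shiftFun, shiftInvFun, hs]
    · by_cases hl : l = i
      · subst hl
        cases k with
        | zero => simp [shiftFun, shiftInvFun]
        | succ k' => simp [shiftFun, shiftInvFun]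
      · by_cases hl2 : l = fsucc i
        · subst hl2; simp [shiftFun, shiftInvFun, hs]
        · simp [shiftFun, shiftInvFun, hl, hl2]
  right_inv := by
    have hs := fsucc_ne hn i
    rintro (_ | ⟨l, k⟩)
    · simp [shiftFun, shiftInvFun, hs]
    · by_cases hl : l = i
      · subst hl; simp [shiftFun, shiftInvFun]
      · by_cases hl2 : l = fsucc i
        · subst hl2
          cases k with
          | zero => simp [shiftFun, shiftInvFun, hs]
          | succ k' => simp [shiftFun, shiftInvFun, hs]
        · simp [shiftFun, shiftInvFun, hl, hl2]

/-!
An eventual translation of the rays has a translation vector, and these vectors add under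
composition; the shift `s_i` has vector `e_{i+1} - e_i`, so the shifts generate a subgroup of
`H_n`. Conversely the vectors `e_{i+1} - e_i` span the lattice of sum-zero vectors, so every
`σ ∈ H_n` agrees far out on each ray with some `τ` generated by the shifts, and `σ τ⁻¹` has finite
support. For `n ≥ 3` the commutator `s_i⁻¹ s_{i+1}⁻¹ s_i s_{i+1}` is the transposition of the
center with `(i, 0)`; conjugating by `s_i⁻¹` turns `swap none (i, k)` into
`swap (i, 0) (i, k + 1)`, so the center can be transposed with every vertex, and these
transpositions generate all permutations of finite support.
-/

open Equiv Filter MulAction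
open scoped commutatorElement

theorem Equiv.Perm.mem_of_swap_mem_of_finite_compl_fixedBy {α : Type*} [DecidableEq α]
    {G : Subgroup (Perm α)} (a : α) (hG : ∀ b, swap a b ∈ G) {σ : Perm α}
    (hσ : (fixedBy α σ)ᶜ.Finite) : σ ∈ G := by
  refine (Subgroup.closure_le G).2 ?_ (mem_closure_isSwap'.2 hσ)
  rintro _ ⟨x, y, -, rfl⟩
  exact SubmonoidClass.swap_mem_trans G (swap_comm x a ▸ hG x) (hG y)

namespace Houghton

variable {ι : Type*}

def IsEventualTranslation (σ : Perm (Option (ι × ℕ))) (s : ι → ℤ) : Prop :=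
  ∀ i, ∀ᶠ k in atTop, ∃ m : ℕ, σ (some (i, k)) = some (i, m) ∧ (m : ℤ) = k + s i

theorem tendsto_toNat_natCast_add_atTop (c : ℤ) :
    Tendsto (fun k : ℕ => ((k : ℤ) + c).toNat) atTop atTop :=
  tendsto_atTop_atTop.2 fun b => ⟨b + c.natAbs, fun k hk => by omega⟩

theorem isEventualTranslation_one : IsEventualTranslation (1 : Perm (Option (ι × ℕ))) 0 :=
  fun _ => Eventually.of_forall fun k => ⟨k, rfl, by simp⟩

variable {σ τ : Perm (Option (ι × ℕ))} {s t : ι → ℤ}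

theorem IsEventualTranslation.mul (hσ : IsEventualTranslation σ s)
    (hτ : IsEventualTranslation τ t) : IsEventualTranslation (σ * τ) (s + t) := by
  intro i
  filter_upwards [hτ i, (tendsto_toNat_natCast_add_atTop (t i)).eventually (hσ i)]
    with k ⟨m, hτk, hm⟩ ⟨m', hσm, hm'⟩
  obtain rfl : ((k : ℤ) + t i).toNat = m := by omega
  exact ⟨m', by rw [Perm.mul_apply, hτk, hσm], by simp only [Pi.add_apply]; omega⟩

theorem IsEventualTranslation.inv (hσ : IsEventualTranslation σ s) :
    IsEventualTranslation σ⁻¹ (-s) := by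
  intro i
  filter_upwards [eventually_ge_atTop (s i).natAbs,
    (tendsto_toNat_natCast_add_atTop (-s i)).eventually (hσ i)] with k hk ⟨m, hσk, hm⟩
  refine ⟨((k : ℤ) + -s i).toNat, Perm.inv_eq_iff_eq.2 ?_, by simp only [Pi.neg_apply]; omega⟩
  rw [hσk]
  congr
  omega

theorem isEventualTranslation_iff [Finite ι] :
    IsEventualTranslation σ s ↔ ∃ N : ℕ, ∀ (i : ι) (k : ℕ), N ≤ k →
      ∃ m : ℕ, σ (some (i, k)) = some (i, m) ∧ (m : ℤ) = (k : ℤ) + s i := by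
  rw [IsEventualTranslation, ← eventually_all, eventually_atTop]
  exact exists_congr fun N => ⟨fun h i k hk => h k hk i, fun h k hk i => h i k hk⟩

theorem IsEventualTranslation.finite_compl_fixedBy [Finite ι]
    (hσ : IsEventualTranslation σ 0) : (fixedBy (Option (ι × ℕ)) σ)ᶜ.Finite := by
  obtain ⟨N, hN⟩ := isEventualTranslation_iff.1 hσ
  refine (((Set.finite_univ.prod (Set.finite_Iio N)).image some).insert none).subset ?_
  rintro (_ | ⟨i, k⟩) hmoved
  · exact Set.mem_insert _ _
  · refine Set.mem_insert_of_mem _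
      ⟨(i, k), ⟨trivial, Set.mem_Iio.2 (not_le.1 fun hk => hmoved ?_)⟩, rfl⟩
    obtain ⟨m, hσk, hm⟩ := hN i k hk
    rw [mem_fixedBy, Perm.smul_def, hσk]
    simp only [Pi.zero_apply, add_zero, Nat.cast_inj] at hm
    rw [hm]

variable (ι) in
def houghton [Fintype ι] : Subgroup (Perm (Option (ι × ℕ))) where
  carrier := {σ | ∃ s : ι → ℤ, ∑ i, s i = 0 ∧ IsEventualTranslation σ s}
  one_mem' := ⟨0, by simp, isEventualTranslation_one⟩
  mul_mem' := fun ⟨s, hs, hσ⟩ ⟨t, ht, hτ⟩ =>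
    ⟨s + t, by simp [Finset.sum_add_distrib, hs, ht], hσ.mul hτ⟩
  inv_mem' := fun ⟨s, hs, hσ⟩ => ⟨-s, by simp [hs], hσ.inv⟩

theorem coe_houghton [Fintype ι] :
    (houghton ι : Set (Perm (Option (ι × ℕ)))) =
      {σ | ∃ (N : ℕ) (s : ι → ℤ), ∑ i, s i = 0 ∧ ∀ (i : ι) (k : ℕ), N ≤ k →
        ∃ m : ℕ, σ (some (i, k)) = some (i, m) ∧ (m : ℤ) = (k : ℤ) + s i} := by
  ext σ
  refine ⟨fun ⟨s, hs, hσ⟩ => ?_, fun ⟨N, s, hs, hN⟩ => ⟨s, hs, isEventualTranslation_iff.2 ⟨N, hN⟩⟩⟩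
  obtain ⟨N, hN⟩ := isEventualTranslation_iff.1 hσ
  exact ⟨N, s, hs, hN⟩

def translationVectors (G : Subgroup (Perm (Option (ι × ℕ)))) : AddSubgroup (ι → ℤ) where
  carrier := {s | ∃ σ ∈ G, IsEventualTranslation σ s}
  zero_mem' := ⟨1, G.one_mem, isEventualTranslation_one⟩
  add_mem' := fun ⟨σ, hσG, hσ⟩ ⟨τ, hτG, hτ⟩ => ⟨σ * τ, G.mul_mem hσG hτG, hσ.mul hτ⟩
  neg_mem' := fun ⟨σ, hσG, hσ⟩ => ⟨σ⁻¹, G.inv_mem hσG, hσ.inv⟩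

theorem mem_of_sum_eq_zero_of_single_sub_single_mem [Fintype ι] [DecidableEq ι]
    {A : AddSubgroup (ι → ℤ)} (j : ι) (hA : ∀ i, Pi.single i 1 - Pi.single j 1 ∈ A)
    (hs : ∑ i, s i = 0) : s ∈ A := by
  have hsum : s = ∑ i, s i • (Pi.single i 1 - Pi.single j 1) := by
    simp only [smul_sub, Finset.sum_sub_distrib, ← Finset.sum_smul, hs, zero_smul, sub_zero]
    ext i
    simp [Finset.sum_apply, Pi.single_apply]
  rw [hsum]
  exact A.sum_mem fun i _ => A.zsmul_mem (hA i) _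

theorem houghton_le [Fintype ι] {G : Subgroup (Perm (Option (ι × ℕ)))}
    (hfin : ∀ σ, (fixedBy (Option (ι × ℕ)) σ)ᶜ.Finite → σ ∈ G)
    (htr : ∀ s : ι → ℤ, ∑ i, s i = 0 → s ∈ translationVectors G) : houghton ι ≤ G := by
  rintro σ ⟨s, hs, hσ⟩
  obtain ⟨τ, hτG, hτ⟩ := htr s hs
  have hστ : IsEventualTranslation (σ * τ⁻¹) 0 := by simpa using hσ.mul hτ.inv
  simpa using G.mul_mem (hfin _ hστ.finite_compl_fixedBy) hτG

variable {n : ℕ}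

theorem val_fsucc (i : Fin n) : (fsucc i).val = if i.val + 1 = n then 0 else i.val + 1 := by
  have := i.isLt
  split_ifs with h
  · simp [fsucc, h]
  · exact Nat.mod_eq_of_lt (by omega)

theorem fsucc_fsucc_ne (hn : 3 ≤ n) (i : Fin n) : fsucc (fsucc i) ≠ i := by
  have := i.isLt
  simp only [ne_eq, Fin.ext_iff, val_fsucc]
  split_ifs <;> omega

theorem single_sub_single_zero_mem [NeZero n] {A : AddSubgroup (Fin n → ℤ)}
    (hA : ∀ i, Pi.single (fsucc i) 1 - Pi.single i 1 ∈ A) (i : Fin n) :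
    Pi.single i 1 - Pi.single 0 1 ∈ A := by
  obtain ⟨k, hk⟩ := i
  induction k with
  | zero => simp
  | succ k ih =>
    have hsucc : fsucc ⟨k, by omega⟩ = ⟨k + 1, hk⟩ := Fin.ext (by simp [val_fsucc]; omega)
    rw [← sub_add_sub_cancel _ (Pi.single (⟨k, by omega⟩ : Fin n) (1 : ℤ)), ← hsucc]
    exact A.add_mem (hA _) (ih (by omega))

theorem shift_isEventualTranslation (hn : 2 ≤ n) (i : Fin n) :
    IsEventualTranslation (shift hn i) (Pi.single (fsucc i) 1 - Pi.single i 1) := by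
  have hi := fsucc_ne hn i
  intro j
  filter_upwards [eventually_ge_atTop 1] with k hk
  obtain ⟨k, rfl⟩ := Nat.exists_eq_add_of_le' hk
  by_cases hji : j = i
  · subst hji
    exact ⟨k, by simp [shift, shiftFun], by simp [hi]⟩
  by_cases hjs : j = fsucc i
  · subst hjs
    exact ⟨k + 2, by simp [shift, shiftFun, hi], by simp [hi]; omega⟩
  · exact ⟨k + 1, by simp [shift, shiftFun, hji, hjs], by simp [hji, hjs]⟩

theorem shift_mem_houghton (hn : 2 ≤ n) (i : Fin n) : shift hn i ∈ houghton (Fin n) :=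
  ⟨_, by simp [Finset.sum_sub_distrib], shift_isEventualTranslation hn i⟩

theorem mem_translationVectors_closure_shifts (hn : 2 ≤ n) {s : Fin n → ℤ}
    (hs : ∑ i, s i = 0) :
    s ∈ translationVectors (Subgroup.closure (Set.range (shift hn))) := by
  have : NeZero n := ⟨by omega⟩
  refine mem_of_sum_eq_zero_of_single_sub_single_mem 0 (single_sub_single_zero_mem fun i => ?_) hs
  exact ⟨shift hn i, Subgroup.subset_closure ⟨i, rfl⟩, shift_isEventualTranslation hn i⟩

theorem commutatorElement_inv_shift_eq_swap (hn : 3 ≤ n) (i : Fin n) :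
    ⁅(shift (Nat.le_of_succ_le hn) i)⁻¹, (shift (Nat.le_of_succ_le hn) (fsucc i))⁻¹⁆ =
      swap none (some (i, 0)) := by
  have e1 := fsucc_ne (Nat.le_of_succ_le hn) i
  have e2 := fsucc_ne (Nat.le_of_succ_le hn) (fsucc i)
  have e3 := fsucc_fsucc_ne hn i
  ext1 v
  rcases v with _ | ⟨l, k⟩
  · simp [commutatorElement_def, shift, shiftFun, shiftInvFun, e2, e3]
  rcases eq_or_ne l i with rfl | h1
  on_goal 2 => rcases eq_or_ne l (fsucc i) with rfl | h2
  on_goal 3 => rcases eq_or_ne l (fsucc (fsucc i)) with rfl | h3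
  all_goals cases k <;> simp [commutatorElement_def, shift, shiftFun, shiftInvFun, swap_apply_def,
    e1.symm, e3.symm, *]

theorem swap_none_mem_closure_shifts (hn : 3 ≤ n) (i : Fin n) (k : ℕ) :
    swap none (some (i, k)) ∈ Subgroup.closure (Set.range (shift (Nat.le_of_succ_le hn))) := by
  set G := Subgroup.closure (Set.range (shift (Nat.le_of_succ_le hn)))
  have hshift (j : Fin n) : shift _ j ∈ G := Subgroup.subset_closure ⟨j, rfl⟩
  have hzero : swap none (some (i, 0)) ∈ G := by
    rw [← commutatorElement_inv_shift_eq_swap hn i, commutatorElement_def, inv_inv, inv_inv]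
    exact G.mul_mem (G.mul_mem (G.mul_mem (G.inv_mem (hshift _)) (G.inv_mem (hshift _)))
      (hshift _)) (hshift _)
  induction k with
  | zero => exact hzero
  | succ k ih =>
    have hconj := swap_apply_apply (shift (Nat.le_of_succ_le hn) i)⁻¹ none (some (i, k))
    simp only [Perm.inv_def, shift, coe_fn_symm_mk, shiftInvFun, if_true] at hconj
    refine SubmonoidClass.swap_mem_trans G hzero ?_
    rw [hconj]
    exact G.mul_mem (G.mul_mem (G.inv_mem (hshift i)) ih) (hshift i)

theorem mem_closure_shifts_of_finite_compl_fixedBy (hn : 3 ≤ n)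
    {σ : Perm (Option (Fin n × ℕ))} (hσ : (fixedBy (Option (Fin n × ℕ)) σ)ᶜ.Finite) :
    σ ∈ Subgroup.closure (Set.range (shift (Nat.le_of_succ_le hn))) := by
  refine Perm.mem_of_swap_mem_of_finite_compl_fixedBy none (fun b => ?_) hσ
  rcases b with _ | ⟨i, k⟩
  · rw [swap_self]
    exact Subgroup.one_mem _
  · exact swap_none_mem_closure_shifts hn i k

theorem closure_range_shift_eq_houghton (hn : 3 ≤ n) :
    Subgroup.closure (Set.range (shift (Nat.le_of_succ_le hn))) = houghton (Fin n) :=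
  le_antisymm ((Subgroup.closure_le _).2 (Set.range_subset_iff.2 (shift_mem_houghton _)))
    (houghton_le (fun _ => mem_closure_shifts_of_finite_compl_fixedBy hn)
      (fun _ => mem_translationVectors_closure_shifts _))

end Houghton

open Houghton

theorem closure_shifts_eq_houghton (n : ℕ) (hn : 3 ≤ n) :
    ((Subgroup.closure
        (Set.range fun i : Fin n => shift (by omega : 2 ≤ n) i)) :
      Set (Equiv.Perm (Option (Fin n × ℕ)))) =
    {σ : Equiv.Perm (Option (Fin n × ℕ)) |
      ∃ (N : ℕ) (s : Fin n → ℤ), (∑ i, s i) = 0 ∧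
        ∀ (i : Fin n) (k : ℕ), N ≤ k →
          ∃ m : ℕ, σ (some (i, k)) = some (i, m) ∧ (m : ℤ) = (k : ℤ) + s i} := by
  rw [← coe_houghton]
  exact congrArg SetLike.coe (closure_range_shift_eq_houghton hn)
end

section
/- Fix n ≥ 2 and r ≥ 1. Let X be a finite set of prefix-replacement permutations of Ω and let k : ℕ be such that for every x ∈ X, both x and x⁻¹ satisfy the prefix-replacement property at depth k (for every q : Fin r and every w : List (Fin n) of length k there exist q', w' with x (q, w ⬝ ω) = (q', w' ⬝ ω) for all ω, and similarly for x⁻¹). Let M ⊆ Ω be the finite set of all (q, w ⬝ c₀) where q : Fin r, w : List (Fin n) has length k, and c₀ is the constant sequence with value 0 : Fin n. Then for every word z : List (X × Bool) whose evaluation in Equiv.Perm Ω is not the identity, there exist lists x and y with z = x ++ y and an element m ∈ M such that (eval (y ++ x)) m ≠ m. -/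
/-- The sequence beginning with the entries of `w` followed by `ω`. -/
def prepend {n : ℕ} (w : List (Fin n)) (ω : ℕ → Fin n) : ℕ → Fin n :=
  fun i => if h : i < w.length then w.get ⟨i, h⟩ else ω (i - w.length)

/-- `σ` acts by prefix replacement at depth `k`. -/
def PrefixReplacementAt {n r : ℕ} (k : ℕ) (σ : Equiv.Perm (Fin r × (ℕ → Fin n))) : Prop :=
  ∀ (q : Fin r) (w : List (Fin n)), w.length = k →
    ∃ (q' : Fin r) (w' : List (Fin n)), ∀ ω : ℕ → Fin n,
      σ (q, prepend w ω) = (q', prepend w' ω)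

/-- Evaluation of a signed word over the alphabet `A` in the group `G`. -/
def evalWord {G A : Type*} [Group G] (f : A → G) (w : List (A × Bool)) : G :=
  (w.map fun p => if p.2 then f p.1 else (f p.1)⁻¹).prod

/-!
Call a point `D`-finite if its sequence is constantly `0` from index `D` on. Since a product of
prefix replacements that moves some point also moves a `D`-finite one for some `D`, it suffices
to show, by induction on `D`, that every cyclic rotation of the word, and of its formal inverse,
fixes all `D`-finite points. For `D ≤ k` this is the hypothesis on `M`. In the inductive step,
suppose a rotation `g` moves `(q, u ⬝ a 0 0 ⋯)` with `u.length = D`. Following the letters of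
`g` one by one, the cylinder of `(q, u)` is mapped by prefix replacements, and no intermediate
prefix is shorter than `u`: otherwise the intermediate image of our point would be `D`-finite, and
the rotation of `g` starting at that letter would move it. The same holds for `g⁻¹`; as both
fix the `D`-finite point `(q, u ⬝ 0 0 ⋯)`, they act on the cylinder by inserting zeros after `u`,
and since `g ∘ g⁻¹ = 1` no zeros are inserted at all, so `g` fixes the whole cylinder.
-/

open Equiv

section Prepend

variable {n : ℕ}

lemma prepend_of_lt {w : List (Fin n)} {ω : ℕ → Fin n} {i : ℕ} (h : i < w.length) :
    prepend w ω i = w[i] := by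
  simp [prepend, h]

lemma prepend_of_le {w : List (Fin n)} {ω : ℕ → Fin n} {i : ℕ} (h : w.length ≤ i) :
    prepend w ω i = ω (i - w.length) := by
  simp [prepend, Nat.not_lt.mpr h]

lemma prepend_append (w v : List (Fin n)) (ω : ℕ → Fin n) :
    prepend (w ++ v) ω = prepend w (prepend v ω) := by
  funext i
  rcases lt_or_ge i w.length with h₁ | h₁
  · rw [prepend_of_lt (by simp; omega), prepend_of_lt h₁, List.getElem_append_left h₁]
  rcases lt_or_ge i (w.length + v.length) with h₂ | h₂
  · rw [prepend_of_lt (by simp; omega), prepend_of_le h₁, prepend_of_lt (by omega),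
      List.getElem_append_right (by omega)]
  · rw [prepend_of_le (by simp; omega), prepend_of_le h₁, prepend_of_le (by omega)]
    simp [Nat.sub_add_eq]

lemma prepend_injective (w : List (Fin n)) : Function.Injective (prepend w) := by
  intro ω ω' h
  funext t
  simpa [prepend_of_le] using congrFun h (t + w.length)

lemma eq_nil_of_forall_prepend_eq [Nontrivial (Fin n)] {w : List (Fin n)}
    (h : ∀ ω, prepend w ω = ω) : w = [] := by
  rcases w with _ | ⟨x, w⟩
  · rfl
  · obtain ⟨y, hy⟩ := exists_ne x
    have := congrFun (h fun _ => y) 0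
    simp [prepend_of_lt] at this
    exact absurd this.symm hy

lemma eq_prepend_ofFn (ξ : ℕ → Fin n) (m : ℕ) :
    ξ = prepend (List.ofFn fun i : Fin m => ξ i) (fun j => ξ (j + m)) := by
  funext i
  rcases lt_or_ge i m with h | h
  · rw [prepend_of_lt (by simpa using h)]
    simp
  · rw [prepend_of_le (by simpa using h)]
    simp [Nat.sub_add_cancel h]

def ConstFrom (c : Fin n) (D : ℕ) (ξ : ℕ → Fin n) : Prop :=
  ∀ t, D ≤ t → ξ t = c

lemma ConstFrom.mono {c : Fin n} {D D' : ℕ} {ξ : ℕ → Fin n} (h : ConstFrom c D ξ)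
    (hD : D ≤ D') : ConstFrom c D' ξ :=
  fun t ht => h t (hD.trans ht)

lemma constFrom_prepend {c : Fin n} {D : ℕ} {ω : ℕ → Fin n} (w : List (Fin n))
    (h : ConstFrom c D ω) : ConstFrom c (w.length + D) (prepend w ω) := by
  intro t ht
  rw [prepend_of_le (by omega)]
  exact h _ (by omega)

lemma constFrom_const (c : Fin n) (D : ℕ) : ConstFrom c D fun _ => c :=
  fun _ _ => rfl

lemma ConstFrom.eq_prepend_const {c : Fin n} {D : ℕ} {ξ : ℕ → Fin n} (h : ConstFrom c D ξ) :
    ξ = prepend (List.ofFn fun i : Fin D => ξ i) fun _ => c := by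
  conv_lhs => rw [eq_prepend_ofFn ξ D]
  congr 1
  funext j
  exact h _ (by omega)

lemma eq_append_replicate_of_prepend_eq {c : Fin n} {u u₁ : List (Fin n)}
    (h : prepend u₁ (fun _ => c) = prepend u fun _ => c) (hle : u.length ≤ u₁.length) :
    u₁ = u ++ List.replicate (u₁.length - u.length) c := by
  refine List.ext_getElem (by simp; omega) fun i h₁ h₂ => ?_
  have hi := congrFun h i
  rw [prepend_of_lt h₁] at hi
  rcases lt_or_ge i u.length with h₃ | h₃
  · rw [prepend_of_lt h₃] at hi
    rw [hi, List.getElem_append_left h₃]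
  · rw [prepend_of_le h₃] at hi
    rw [hi, List.getElem_append_right h₃]
    simp

end Prepend

section PrefixReplacement

variable {n r : ℕ}

local notation "Ω" => Fin r × (ℕ → Fin n)

lemma PrefixReplacementAt.of_le_length {k : ℕ} {σ : Perm Ω} (h : PrefixReplacementAt k σ)
    (q : Fin r) {u : List (Fin n)} (hu : k ≤ u.length) :
    ∃ q' u', u.length - k ≤ u'.length ∧ ∀ ω, σ (q, prepend u ω) = (q', prepend u' ω) := by
  obtain ⟨q', w', hw⟩ := h q (u.take k) (by simp; omega)
  refine ⟨q', w' ++ u.drop k, by simp, fun ω => ?_⟩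
  rw [← List.take_append_drop k u, prepend_append, hw, prepend_append]
  simp

lemma PrefixReplacementAt.list_prod {k : ℕ} {l : List (Perm Ω)}
    (hl : ∀ σ ∈ l, PrefixReplacementAt k σ) : PrefixReplacementAt (k * l.length) l.prod := by
  induction l using List.reverseRecOn with
  | nil => exact fun q u _ => ⟨q, u, fun ω => by simp⟩
  | append_singleton l σ ih =>
    intro q u hu
    simp only [List.length_append, List.length_singleton, Nat.mul_succ] at hu
    obtain ⟨q₁, u₁, hu₁, hσ⟩ := (hl σ (by simp)).of_le_length q (u := u) (by omega)
    obtain ⟨q', u', -, hl'⟩ := (ih fun τ hτ => hl τ (by simp [hτ])).of_le_length q₁ (u := u₁)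
      (by omega)
    refine ⟨q', u', fun ω => ?_⟩
    rw [List.prod_append, List.prod_singleton, Perm.mul_apply, hσ, hl']

lemma PrefixReplacementAt.exists_constFrom_apply_ne {m : ℕ} {g : Perm Ω}
    (hg : PrefixReplacementAt m g) (hne : g ≠ 1) (c : Fin n) :
    ∃ D q ξ, ConstFrom c D ξ ∧ g (q, ξ) ≠ (q, ξ) := by
  obtain ⟨⟨q, ξ⟩, hmoved⟩ : ∃ p, g p ≠ p := by
    by_contra! h
    exact hne (Equiv.ext h)
  set u := List.ofFn fun i : Fin m => ξ i
  set ω := fun j => ξ (j + m)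
  obtain ⟨q', u', hg'⟩ := hg q u (by simp [u])
  rw [eq_prepend_ofFn ξ m, hg'] at hmoved
  by_cases hq : q' = q
  · subst hq
    obtain ⟨i, hi⟩ := Function.ne_iff.mp
      (show prepend u' ω ≠ prepend u ω from fun h => hmoved (by rw [h]))
    set ω' : ℕ → Fin n := fun t => if t ≤ i then ω t else c
    have hω' : ∀ v : List (Fin n), prepend v ω' i = prepend v ω i := by
      intro v
      unfold prepend
      split_ifs <;> simp_all [ω']
    refine ⟨u.length + (i + 1), q', prepend u ω', constFrom_prepend u fun t ht => ?_, ?_⟩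
    · simp only [ω', if_neg (show ¬t ≤ i by omega)]
    · rw [hg']
      intro h
      exact hi (by simpa only [hω'] using congrFun (congrArg Prod.snd h) i)
  · refine ⟨u.length + 0, q, prepend u fun _ => c,
      constFrom_prepend u (constFrom_const c 0), ?_⟩
    rw [hg']
    exact fun h => hq (congrArg Prod.fst h)

lemma apply_prepend_eq_self_of_const [Nontrivial (Fin n)] {c : Fin n} {g : Perm Ω}
    {q q₁ q₂ : Fin r} {u u₁ u₂ : List (Fin n)}
    (h₁ : ∀ ω, g (q, prepend u ω) = (q₁, prepend u₁ ω))
    (h₂ : ∀ ω, g⁻¹ (q, prepend u ω) = (q₂, prepend u₂ ω))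
    (hl₁ : u.length ≤ u₁.length) (hl₂ : u.length ≤ u₂.length)
    (hfix : g (q, prepend u fun _ => c) = (q, prepend u fun _ => c)) (ω : ℕ → Fin n) :
    g (q, prepend u ω) = (q, prepend u ω) := by
  have hfix' : g⁻¹ (q, prepend u fun _ => c) = (q, prepend u fun _ => c) :=
    Perm.inv_eq_iff_eq.mpr hfix.symm
  obtain ⟨rfl, e₁⟩ := Prod.mk.inj (hfix.symm.trans (h₁ _))
  obtain ⟨rfl, e₂⟩ := Prod.mk.inj (hfix'.symm.trans (h₂ _))
  rw [eq_append_replicate_of_prepend_eq e₁.symm hl₁] at h₁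
  rw [eq_append_replicate_of_prepend_eq e₂.symm hl₂] at h₂
  set p₁ := List.replicate (u₁.length - u.length) c
  set p₂ := List.replicate (u₂.length - u.length) c
  have hp : ∀ ω, prepend (p₁ ++ p₂) ω = ω := by
    intro ω
    have : (q, prepend u ω) = (q, prepend u (prepend (p₁ ++ p₂) ω)) := by
      calc (q, prepend u ω) = g (g⁻¹ (q, prepend u ω)) := (g.apply_symm_apply _).symm
        _ = _ := by rw [h₂, prepend_append, h₁, prepend_append, prepend_append]
    exact (prepend_injective u (congrArg Prod.snd this)).symm
  have hp₁ : p₁ = [] := (List.append_eq_nil_iff.mp (eq_nil_of_forall_prepend_eq hp)).1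
  simpa [hp₁] using h₁ ω

def cyclicFixers (k : ℕ) (c : Fin n) : Set (List (Perm Ω)) :=
  {l | (∀ σ ∈ l, PrefixReplacementAt k σ ∧ PrefixReplacementAt k σ⁻¹) ∧
    ∀ j q (w : List (Fin n)), w.length = k →
      (l.rotate j).prod (q, prepend w fun _ => c) = (q, prepend w fun _ => c)}

section CyclicFixers

variable {k : ℕ} {c : Fin n} {l : List (Perm (Fin r × (ℕ → Fin n)))}

lemma rotate_mem_cyclicFixers (hl : l ∈ cyclicFixers k c) (i : ℕ) :
    l.rotate i ∈ cyclicFixers k c :=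
  ⟨fun σ hσ => hl.1 σ (List.mem_rotate.mp hσ), fun j => by
    rw [List.rotate_rotate]
    exact hl.2 _⟩

lemma inv_reverse_mem_cyclicFixers (hl : l ∈ cyclicFixers k c) :
    (l.map (·⁻¹)).reverse ∈ cyclicFixers k c := by
  refine ⟨?_, fun j q w hw => ?_⟩
  · simp only [List.mem_reverse, List.mem_map]
    rintro _ ⟨τ, hτ, rfl⟩
    exact ⟨(hl.1 τ hτ).2, by simpa using (hl.1 τ hτ).1⟩
  · rw [List.rotate_reverse, ← List.map_rotate, ← List.prod_inv_reverse, Perm.inv_eq_iff_eq]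
    exact (hl.2 _ q w hw).symm

lemma prod_apply_eq_self_of_constFrom_le (hl : l ∈ cyclicFixers k c) {D : ℕ} (hD : D ≤ k)
    {p : Ω} (hp : ConstFrom c D p.2) : l.prod p = p := by
  obtain ⟨q, ξ⟩ := p
  rw [(show ConstFrom c k ξ from hp.mono hD).eq_prepend_const]
  simpa using hl.2 0 q _ (by simp)

lemma exists_long_prefix_of_prod_apply_ne {e : ℕ} (hk : k ≤ e)
    (hfix : ∀ l ∈ cyclicFixers k c, ∀ p : Ω, ConstFrom c e p.2 → l.prod p = p)
    (hl : l ∈ cyclicFixers k c) {θ : ℕ → Fin n} (hθ : ConstFrom c 1 θ) {q : Fin r}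
    {v : List (Fin n)} (hv : e ≤ v.length)
    (hmoved : l.prod (q, prepend v θ) ≠ (q, prepend v θ)) :
    ∃ q' v', e ≤ v'.length ∧ ∀ ω, l.prod (q, prepend v ω) = (q', prepend v' ω) := by
  suffices ∀ a b, l = a ++ b →
      ∃ q' v', e ≤ v'.length ∧ ∀ ω, b.prod (q, prepend v ω) = (q', prepend v' ω) by
    simpa using this [] l rfl
  intro a b
  induction b generalizing a with
  | nil => exact fun _ => ⟨q, v, hv, by simp⟩
  | cons σ b ih =>
    intro hab
    obtain ⟨q₁, v₁, hv₁, h₁⟩ := ih (a ++ [σ]) (by simp [hab])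
    obtain ⟨q₂, v₂, -, h₂⟩ := (hl.1 σ (by simp [hab])).1.of_le_length q₁ (u := v₁) (by omega)
    have hσb : ∀ ω, (σ :: b).prod (q, prepend v ω) = (q₂, prepend v₂ ω) := fun ω => by
      rw [List.prod_cons, Perm.mul_apply, h₁, h₂]
    refine ⟨q₂, v₂, ?_, hσb⟩
    by_contra! hshort
    -- otherwise the rotation `(σ :: b) ++ a` of `l` fixes `(σ :: b).prod (q, v ⬝ θ)`
    have hrot : (σ :: b) ++ a ∈ cyclicFixers k c := by
      simpa [hab] using rotate_mem_cyclicFixers hl a.length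
    have := hfix _ hrot (q₂, prepend v₂ θ) ((constFrom_prepend v₂ hθ).mono (by omega))
    rw [← hσb, List.prod_append, Perm.mul_apply] at this
    rw [hab, List.prod_append, Perm.mul_apply] at hmoved
    exact hmoved (Equiv.injective _ this)

lemma prod_apply_eq_self_of_constFrom_succ [Nontrivial (Fin n)] {e : ℕ} (hk : k ≤ e)
    (hfix : ∀ l ∈ cyclicFixers k c, ∀ p : Ω, ConstFrom c e p.2 → l.prod p = p)
    (hl : l ∈ cyclicFixers k c) {p : Ω} (hp : ConstFrom c (e + 1) p.2) : l.prod p = p := by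
  obtain ⟨q, ξ⟩ := p
  set u := List.ofFn fun i : Fin e => ξ i
  have hu : u.length = e := by simp [u]
  have hθ : ConstFrom c 1 fun j => ξ (j + e) := fun t ht => hp _ (by omega)
  rw [eq_prepend_ofFn ξ e] at hp ⊢
  by_contra hmoved
  have hmoved' : l.prod⁻¹ (q, prepend u _) ≠ (q, prepend u _) :=
    fun h => hmoved (Perm.inv_eq_iff_eq.mp h).symm
  rw [List.prod_inv_reverse] at hmoved'
  obtain ⟨q₁, u₁, hu₁, h₁⟩ :=
    exists_long_prefix_of_prod_apply_ne hk hfix hl hθ hu.ge hmoved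
  obtain ⟨q₂, u₂, hu₂, h₂⟩ := exists_long_prefix_of_prod_apply_ne hk hfix
    (inv_reverse_mem_cyclicFixers hl) hθ hu.ge hmoved'
  rw [← List.prod_inv_reverse] at h₂
  have hfix_const := hfix l hl (q, prepend u fun _ => c)
    (by simpa [hu] using constFrom_prepend u (constFrom_const c 0))
  exact hmoved (apply_prepend_eq_self_of_const h₁ h₂ (by omega) (by omega) hfix_const _)

lemma prod_apply_eq_self_of_constFrom [Nontrivial (Fin n)] (D : ℕ) :
    ∀ l ∈ cyclicFixers k c, ∀ p : Ω, ConstFrom c D p.2 → l.prod p = p := by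
  induction D with
  | zero => exact fun l hl p hp => prod_apply_eq_self_of_constFrom_le hl (Nat.zero_le k) hp
  | succ e ih =>
    intro l hl p hp
    by_cases hk : k ≤ e
    · exact prod_apply_eq_self_of_constFrom_succ hk ih hl hp
    · exact prod_apply_eq_self_of_constFrom_le hl (by omega) hp

theorem prod_eq_one_of_mem_cyclicFixers [Nontrivial (Fin n)] (hl : l ∈ cyclicFixers k c) :
    l.prod = 1 := by
  by_contra hne
  obtain ⟨D, q, ξ, hξ, hmoved⟩ :=
    (PrefixReplacementAt.list_prod fun σ hσ => (hl.1 σ hσ).1).exists_constFrom_apply_ne hne c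
  exact hmoved (prod_apply_eq_self_of_constFrom D l hl (q, ξ) hξ)

end CyclicFixers

end PrefixReplacement

theorem exists_cyclic_permutation_moving_M (n r : ℕ) (hn : 2 ≤ n)
    (X : Finset (Equiv.Perm (Fin r × (ℕ → Fin n)))) (k : ℕ)
    (hX : ∀ x ∈ X, PrefixReplacementAt k x ∧ PrefixReplacementAt k x⁻¹)
    (M : Set (Fin r × (ℕ → Fin n)))
    (hM : M = {ω : Fin r × (ℕ → Fin n) | ∃ (q : Fin r) (w : List (Fin n)),
      w.length = k ∧ ω = (q, prepend w (fun _ => (⟨0, by omega⟩ : Fin n)))})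
    (z : List (X × Bool))
    (hz : evalWord (fun x : X => (x : Equiv.Perm (Fin r × (ℕ → Fin n)))) z ≠ 1) :
    ∃ x y : List (X × Bool), z = x ++ y ∧
      ∃ m ∈ M,
        (evalWord (fun x : X => (x : Equiv.Perm (Fin r × (ℕ → Fin n)))) (y ++ x)) m ≠ m := by
  have : Nontrivial (Fin n) := Fin.nontrivial_iff_two_le.mpr hn
  by_contra! hfix
  refine hz (prod_eq_one_of_mem_cyclicFixers (k := k) (c := ⟨0, by omega⟩) ⟨?_, ?_⟩)
  · simp only [List.mem_map]
    rintro _ ⟨⟨x, _ | _⟩, -, rfl⟩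
    · simpa using (hX x x.2).symm
    · simpa using hX x x.2
  · intro j q w hw
    rw [← List.map_rotate, List.rotate_eq_drop_append_take_mod]
    exact hfix _ _ (List.take_append_drop _ _).symm _ (hM ▸ ⟨q, w, hw, rfl⟩)
end
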